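/- Let (S, 𝒜) be a measurable space and f : S × S → ℝ a measurable symmetric function (f(x,y) = f(y,x) for all x, y) such that for every finitely supported probability measure μ on S one has ∫∫ f(x,y) dμ(x) dμ(y) ≥ 0. Then for every probability measure Q on S such that f is square-integrable with respect to Q ⊗ Q and x ↦ f(x,x) is square-integrable with respect to Q, one has ∫∫ f(x,y) dQ(x) dQ(y) ≥ 0. -/

import Mathlib

/-!
Let `I = ∫∫ f dQ dQ` and `D = ∫ f(x, x) dQ(x)`. For i.i.d. samples `X₁, …, Xₙ` of law `Q`, the
uniform measure on the sample is finitely supported, so `0 ≤ ∑ᵢⱼ f(Xᵢ, Xⱼ)` pointwise. Taking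
expectations, the `n` diagonal terms contribute `D` each and the `n(n - 1)` off-diagonal ones `I`
each, because distinct coordinates are independent. Hence `0 ≤ D + (n - 1) I` for every `n`,
which forces `0 ≤ I`.
-/

open MeasureTheory ProbabilityTheory

section Pi

variable {ι : Type*} [Fintype ι] {Ω : ι → Type*} [∀ i, MeasurableSpace (Ω i)]
  (μ : (i : ι) → Measure (Ω i)) [∀ i, IsProbabilityMeasure (μ i)]

theorem measurePreserving_eval_pair {i j : ι} (hij : i ≠ j) :
    MeasurePreserving (fun x : (i : ι) → Ω i => (x i, x j)) (Measure.pi μ) ((μ i).prod (μ j)) := by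
  have hind : IndepFun (fun x : (i : ι) → Ω i => x i) (fun x => x j) (Measure.pi μ) :=
    (iIndepFun_pi (X := fun _ => id) fun _ => aemeasurable_id).indepFun hij
  refine ⟨by fun_prop, ?_⟩
  rw [hind.map_prod_eq_prod_map_map (measurable_pi_apply i).aemeasurable
    (measurable_pi_apply j).aemeasurable, (measurePreserving_eval μ i).map_eq,
    (measurePreserving_eval μ j).map_eq]

theorem integral_comp_eval_pair {E : Type*} [NormedAddCommGroup E] [NormedSpace ℝ E]
    {i j : ι} (hij : i ≠ j) {f : Ω i × Ω j → E}
    (hf : AEStronglyMeasurable f ((μ i).prod (μ j))) :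
    ∫ x, f (x i, x j) ∂Measure.pi μ = ∫ p, f p ∂(μ i).prod (μ j) := by
  rw [← (measurePreserving_eval_pair μ hij).map_eq] at hf ⊢
  exact (integral_map (by fun_prop) hf).symm

end Pi

theorem integral_sum_sum_comp_eval {ι S : Type*} [Fintype ι] [MeasurableSpace S]
    (μ : Measure S) [IsProbabilityMeasure μ] {f : S × S → ℝ}
    (hf : Integrable f (μ.prod μ)) (hdiag : Integrable (fun x => f (x, x)) μ) :
    ∫ x, ∑ i, ∑ j, f (x i, x j) ∂Measure.pi (fun _ : ι => μ) =
      Fintype.card ι * ∫ x, f (x, x) ∂μ +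
        Fintype.card ι * (Fintype.card ι - 1) * ∫ p, f p ∂μ.prod μ := by
  classical
  set D := ∫ x, f (x, x) ∂μ
  set I := ∫ p, f p ∂μ.prod μ
  have hterm (i j : ι) : Integrable (fun x => f (x i, x j)) (Measure.pi fun _ => μ) ∧
      ∫ x, f (x i, x j) ∂Measure.pi (fun _ => μ) = if i = j then D else I := by
    by_cases hij : i = j
    · subst hij
      exact ⟨integrable_comp_eval (μ := fun _ => μ) (i := i) (f := fun s => f (s, s)) hdiag, by
        rw [if_pos rfl, integral_comp_eval (μ := fun _ => μ) (i := i) (f := fun s => f (s, s))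
          hdiag.aestronglyMeasurable]⟩
    · exact ⟨(measurePreserving_eval_pair _ hij).integrable_comp_of_integrable hf,
        by rw [if_neg hij, integral_comp_eval_pair _ hij hf.aestronglyMeasurable]⟩
  have hrow (i : ι) : ∑ j, (if i = j then D else I) = D + (Fintype.card ι - 1) * I := by
    have hsplit (j : ι) : (if i = j then D else I) = I + if i = j then D - I else 0 := by
      split_ifs <;> ring
    simp only [hsplit, Finset.sum_add_distrib, Finset.sum_ite_eq, Finset.mem_univ, if_true,
      Finset.sum_const, Finset.card_univ, nsmul_eq_mul]
    ring
  rw [integral_finsetSum _ fun i _ => integrable_finsetSum _ fun j _ => (hterm i j).1]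
  simp_rw [integral_finsetSum _ fun j _ => (hterm _ j).1, fun i j => (hterm i j).2, hrow]
  simp only [Finset.sum_const, Finset.card_univ, nsmul_eq_mul]
  ring

theorem sum_sum_nonneg_of_forall_weighted_nonneg {S : Type*} {f : S × S → ℝ}
    (hpos : ∀ (n : ℕ) (x : Fin n → S) (w : Fin n → ℝ), (∀ i, 0 ≤ w i) → (∑ i, w i = 1) →
      0 ≤ ∑ i, ∑ j, w i * w j * f (x i, x j))
    {n : ℕ} (x : Fin n → S) : 0 ≤ ∑ i, ∑ j, f (x i, x j) := by
  rcases Nat.eq_zero_or_pos n with rfl | hn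
  · simp
  have hn' : (0 : ℝ) < n := by exact_mod_cast hn
  have h := hpos n x (fun _ => 1 / n) (fun _ => by positivity) (by simp [hn'.ne'])
  simp_rw [mul_assoc, ← Finset.mul_sum] at h
  exact nonneg_of_mul_nonneg_right (nonneg_of_mul_nonneg_right h (by positivity)) (by positivity)

theorem nonneg_of_forall_nat_mul_add_nonneg {a b : ℝ} (h : ∀ n : ℕ, 0 ≤ n * a + b) : 0 ≤ a := by
  by_contra! ha
  obtain ⟨n, hn⟩ := exists_nat_gt (b / -a)
  have := (div_lt_iff₀ (neg_pos.2 ha)).1 hn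
  linarith [h n]

theorem double_integral_nonneg_of_finitely_supported_nonneg_general
    {S : Type*} [MeasurableSpace S] (f : S × S → ℝ)
    (hpos : ∀ (n : ℕ) (x : Fin n → S) (w : Fin n → ℝ), (∀ i, 0 ≤ w i) → (∑ i, w i = 1) →
      0 ≤ ∑ i, ∑ j, w i * w j * f (x i, x j)) :
    ∀ (Q : Measure S), IsProbabilityMeasure Q → MemLp f 2 (Q.prod Q) →
      MemLp (fun x => f (x, x)) 2 Q →
      0 ≤ ∫ x, ∫ y, f (x, y) ∂Q ∂Q := by
  intro Q _ hL2 hL2diag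
  have hf := hL2.integrable one_le_two
  rw [← integral_prod f hf]
  refine nonneg_of_forall_nat_mul_add_nonneg (b := ∫ x, f (x, x) ∂Q) fun m => ?_
  have h : 0 ≤ ∫ x, ∑ i, ∑ j, f (x i, x j) ∂Measure.pi fun _ : Fin (m + 1) => Q :=
    integral_nonneg fun x => sum_sum_nonneg_of_forall_weighted_nonneg hpos x
  rw [integral_sum_sum_comp_eval Q hf (hL2diag.integrable one_le_two)] at h
  rw [Fintype.card_fin, Nat.cast_succ, add_sub_cancel_right] at h
  exact nonneg_of_mul_nonneg_right (by linarith) m.cast_add_one_pos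

/-- If a measurable symmetric `f : S × S → ℝ` is nonnegative-definite
against every finitely supported probability measure (i.e. `∑ᵢⱼ wᵢ wⱼ f(xᵢ,xⱼ) ≥ 0` for
all nonnegative weights summing to 1), then `∫∫ f dQ dQ ≥ 0` for every probability
measure `Q` making `f` square-integrable on `Q ⊗ Q` with square-integrable diagonal. -/
theorem double_integral_nonneg_of_finitely_supported_nonneg
    {S : Type*} [MeasurableSpace S] (f : S × S → ℝ) (hf : Measurable f)
    (hsymm : ∀ x y, f (x, y) = f (y, x))
    (hpos : ∀ (n : ℕ) (x : Fin n → S) (w : Fin n → ℝ), (∀ i, 0 ≤ w i) → (∑ i, w i = 1) →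
      0 ≤ ∑ i, ∑ j, w i * w j * f (x i, x j)) :
    ∀ (Q : Measure S), IsProbabilityMeasure Q → MemLp f 2 (Q.prod Q) →
      MemLp (fun x => f (x, x)) 2 Q →
      0 ≤ ∫ x, ∫ y, f (x, y) ∂Q ∂Q :=
  double_integral_nonneg_of_finitely_supported_nonneg_general f hpos
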